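/- Let X be a uniformly convex Banach space with a function u : (0,∞) → (0,∞) such that for all ε > 0 and x, y ∈ X with ‖x‖ ≤ ‖y‖ ≤ 1 and ‖x−y‖ ≥ ε, ‖(x+y)/2‖ ≤ ‖y‖ − u(ε). Let d ≥ 1 and T_1,...,T_d : X → X be commuting linear contractions, x ∈ X with ‖x‖ ≤ 1, and x_n := (n+1)^(−d) Σ_{k ∈ [0,n]^d} T^k x. Define Φ(d,δ,Q) := max(Q, ⌈2^d Q/δ⌉), f(s) := 2s²+2s, G(ε,g) := ((f∘g)^M)^(⌈1/ε⌉)(0), h_{γ,g,d}(n) := Φ(d,γ/2,n)+g(Φ(d,γ/2,n)), Ψ(d,γ,g) := Φ(d,γ/2,G(γ/2,h_{γ,g,d})), and Θ_{u,d}(ε,g) := Ψ(d,u(ε)/2,g). Then for every ε > 0 and g : ℕ → ℕ there exists N ≤ Θ_{u,d}(ε,g) such that for all i, j ∈ [N, N+g(N)], ‖x_i − x_j‖ ≤ ε. -/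

import Mathlib

/-!
Write `x_n` for the averages. For `i, j ≤ s` and `m` much larger than `s`, the average `x_m` is
almost invariant under `T^k`, `k ∈ [0,s]^d`, since shifting the box `[0,m]^d` by `k` changes it in a
proportion `O(d s / m)`. As the averaging operators commute and contract, this gives
`‖x_m‖ ≤ ‖(x_i + x_j)/2‖ + 2^d s/(m+1)`, and by uniform convexity the midpoint of an `ε`-far pair
has norm at most `max ‖x_i‖ ‖x_j‖ - u ε`. If metastability failed for every `N ≤ Θ`, each of the
windows `[N_k, N_k + g N_k]` built by the iteration in `Ψ` would contain an `ε`-far pair, so the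
norms beyond the `k`-th window would be at most `1 - k u(ε)/2`; after `⌈4/u(ε)⌉ + 1` windows this is
negative.
-/

/-- `box d n` is `[0,n]^d`. -/
def box (d n : ℕ) : Finset (Fin d → ℕ) := Fintype.piFinset fun _ => Finset.range (n+1)

/-- `Tpow T k = T₁^{k₁} ⋯ T_d^{k_d}`. -/
def Tpow {X : Type*} [AddCommGroup X] [Module ℝ X] {d : ℕ}
    (T : Fin d → X →ₗ[ℝ] X) (k : Fin d → ℕ) : X →ₗ[ℝ] X :=
  (List.ofFn fun l => T l ^ k l).prod

/-- The multi-parameter ergodic average `x_n = (n+1)^{-d} ∑_{k ∈ [0,n]^d} T^k x`. -/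
noncomputable def erg {X : Type*} [AddCommGroup X] [Module ℝ X] {d : ℕ}
    (T : Fin d → X →ₗ[ℝ] X) (x : X) (n : ℕ) : X :=
  ((n+1 : ℝ)^d)⁻¹ • ∑ k ∈ box d n, Tpow T k x

/-- `Φ(d,δ,Q) := max(Q, ⌈2^d Q / δ⌉)`. -/
noncomputable def Phi (d : ℕ) (δ : ℝ) (Q : ℕ) : ℕ := max Q ⌈(2^d * Q : ℝ) / δ⌉₊

/-- `iterMax g` is `g^M`, i.e. `g^M(n) = max_{i ≤ n} g(i)`. -/
def iterMax (g : ℕ → ℕ) (n : ℕ) : ℕ := Finset.sup (Finset.range (n+1)) g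

/-- `f(s) := 2s² + 2s`. -/
def fPair (s : ℕ) : ℕ := 2*s^2 + 2*s

/-- `G(ε,g) := ((f ∘ g)^M)^(⌈1/ε⌉)(0)`. -/
noncomputable def Gfun (ε : ℝ) (g : ℕ → ℕ) : ℕ := (iterMax (fPair ∘ g))^[⌈1/ε⌉₊] 0

/-- `h_{γ,g,d}(n) := Φ(d,γ/2,n) + g(Φ(d,γ/2,n))`. -/
noncomputable def hfun (γ : ℝ) (g : ℕ → ℕ) (d n : ℕ) : ℕ :=
  Phi d (γ/2) n + g (Phi d (γ/2) n)

/-- `Ψ(d,γ,g) := Φ(d,γ/2,G(γ/2,h_{γ,g,d}))`. -/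
noncomputable def Psi (d : ℕ) (γ : ℝ) (g : ℕ → ℕ) : ℕ :=
  Phi d (γ/2) (Gfun (γ/2) (hfun γ g d))

/-- `Θ_{u,d}(ε,g) := Ψ(d,u(ε)/2,g)`. -/
noncomputable def Theta (u : ℝ → ℝ) (d : ℕ) (ε : ℝ) (g : ℕ → ℕ) : ℕ :=
  Psi d (u ε / 2) g

open Finset hiding box

section Tpow

variable {X : Type*} [AddCommGroup X] [Module ℝ X] {d : ℕ} {T : Fin d → X →ₗ[ℝ] X}

open scoped IsMulCommutative in
/-- Pairwise commuting `T l` generate a commutative monoid, in which `Tpow` is a finite product. -/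
lemma Tpow_add (hcomm : ∀ l m, T l ∘ₗ T m = T m ∘ₗ T l) (a b : Fin d → ℕ) :
    Tpow T (a + b) = Tpow T a * Tpow T b := by
  let S := Submonoid.closure (Set.range T)
  have : IsMulCommutative S := Submonoid.isMulCommutative_closure _ <| by
    rintro _ ⟨l, rfl⟩ _ ⟨m, rfl⟩
    exact hcomm l m
  let t : Fin d → S := fun l => ⟨T l, Submonoid.subset_closure ⟨l, rfl⟩⟩
  have hTpow : ∀ k, Tpow T k = ((∏ l, t l ^ k l : S) : X →ₗ[ℝ] X) := fun k => by
    rw [← List.prod_ofFn, Submonoid.coe_list_prod, Tpow, List.map_ofFn]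
    rfl
  simp only [hTpow, Pi.add_apply, pow_add, prod_mul_distrib, Submonoid.coe_mul]

lemma commute_Tpow (hcomm : ∀ l m, T l ∘ₗ T m = T m ∘ₗ T l) (a b : Fin d → ℕ) :
    Commute (Tpow T a) (Tpow T b) := by
  rw [Commute, SemiconjBy, ← Tpow_add hcomm, ← Tpow_add hcomm, add_comm]

end Tpow

def contractions (X : Type*) [SeminormedAddCommGroup X] [NormedSpace ℝ X] :
    Submonoid (X →ₗ[ℝ] X) where
  carrier := {f | ∀ y, ‖f y‖ ≤ ‖y‖}
  one_mem' _ := le_rfl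
  mul_mem' hf hg y := (hf _).trans (hg y)

lemma norm_inv_card_smul_sum_le {ι E : Type*} [SeminormedAddCommGroup E] [NormedSpace ℝ E]
    {s : Finset ι} {f : ι → E} {C : ℝ} (hC : 0 ≤ C) (hf : ∀ i ∈ s, ‖f i‖ ≤ C) :
    ‖(#s : ℝ)⁻¹ • ∑ i ∈ s, f i‖ ≤ C := by
  rcases s.eq_empty_or_nonempty with rfl | hs
  · simpa using hC
  have hcard : (0 : ℝ) < #s := by exact_mod_cast hs.card_pos
  rw [norm_smul, norm_inv, Real.norm_natCast, inv_mul_le_iff₀ hcard]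
  calc ‖∑ i ∈ s, f i‖ ≤ ∑ i ∈ s, C := norm_sum_le_of_le s hf
    _ = #s * C := by rw [sum_const, nsmul_eq_mul]

lemma norm_sum_sub_sum_le_of_card_eq {ι E : Type*} [DecidableEq ι] [SeminormedAddCommGroup E]
    {s t : Finset ι} (hst : #s = #t) {f : ι → E} {C : ℝ} (hf : ∀ i, ‖f i‖ ≤ C) :
    ‖∑ i ∈ t, f i - ∑ i ∈ s, f i‖ ≤ 2 * #(s \ t) * C := by
  have hsum : ∀ u : Finset ι, ‖∑ i ∈ u, f i‖ ≤ #u * C := fun u =>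
    (norm_sum_le_of_le u fun i _ => hf i).trans_eq (by rw [sum_const, nsmul_eq_mul])
  rw [← sum_sdiff_sub_sum_sdiff]
  calc ‖∑ i ∈ t \ s, f i - ∑ i ∈ s \ t, f i‖
      ≤ ‖∑ i ∈ t \ s, f i‖ + ‖∑ i ∈ s \ t, f i‖ := norm_sub_le _ _
    _ ≤ #(t \ s) * C + #(s \ t) * C := add_le_add (hsum _) (hsum _)
    _ = 2 * #(s \ t) * C := by rw [card_sdiff_comm hst.symm]; ring

/-- `A ^ #s - ∏ l ∈ s, (A - j l) ≤ (∑ l ∈ s, j l) * A ^ (#s - 1)`, multiplied through by `A` to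
avoid truncated subtraction. -/
lemma mul_pow_card_le_mul_prod_tsub_add {ι : Type*} [DecidableEq ι] (s : Finset ι) (A : ℕ)
    (j : ι → ℕ) : A * A ^ #s ≤ A * ∏ l ∈ s, (A - j l) + (∑ l ∈ s, j l) * A ^ #s := by
  induction s using Finset.induction_on with
  | empty => simp
  | insert a s ha ih =>
    rw [prod_insert ha, sum_insert ha, card_insert_of_notMem ha, pow_succ]
    have hA : A ≤ (A - j a) + j a := le_tsub_add
    have hP : ∏ l ∈ s, (A - j l) ≤ A ^ #s :=
      prod_le_pow_card s _ A fun l _ => Nat.sub_le A (j l)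
    calc A * (A ^ #s * A) = (A * A ^ #s) * A := by ring
      _ ≤ (A * ∏ l ∈ s, (A - j l) + (∑ l ∈ s, j l) * A ^ #s) * A := Nat.mul_le_mul_right A ih
      _ ≤ (A * ∏ l ∈ s, (A - j l)) * ((A - j a) + j a) + (∑ l ∈ s, j l) * A ^ #s * A := by
        rw [add_mul]; gcongr
      _ ≤ A * ((A - j a) * ∏ l ∈ s, (A - j l)) + (j a + ∑ l ∈ s, j l) * (A ^ #s * A) := by
        have : j a * (A * ∏ l ∈ s, (A - j l)) ≤ j a * (A ^ #s * A) := by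
          rw [mul_comm A]; gcongr
        nlinarith

lemma mem_box {d n : ℕ} {k : Fin d → ℕ} : k ∈ box d n ↔ ∀ l, k l ≤ n := by
  simp [box]

lemma card_box (d n : ℕ) : #(box d n) = (n + 1) ^ d := by
  simp [box]

lemma card_box_sdiff_image_add_mul_le {d i m : ℕ} {j : Fin d → ℕ} (hj : ∀ l, j l ≤ i) :
    #(box d m \ (box d m).image (j + ·)) * (m + 1) ≤ d * i * (m + 1) ^ d := by
  have hsub : Fintype.piFinset (fun l => Icc (j l) m) ⊆ box d m ∩ (box d m).image (j + ·) := by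
    intro k hk
    simp only [Fintype.mem_piFinset, mem_Icc] at hk
    refine mem_inter.2 ⟨mem_box.2 fun l => (hk l).2, mem_image.2 ⟨k - j, ?_, ?_⟩⟩
    · exact mem_box.2 fun l => (Nat.sub_le _ _).trans (hk l).2
    · funext l
      exact Nat.add_sub_cancel' (hk l).1
  have hinter : ∏ l, (m + 1 - j l) ≤ #(box d m ∩ (box d m).image (j + ·)) := by
    simpa [Nat.card_Icc] using card_le_card hsub
  have hsplit := card_sdiff_add_card_inter (box d m) ((box d m).image (j + ·))
  have hcount := mul_pow_card_le_mul_prod_tsub_add univ (m + 1) j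
  have hsum : ∑ l, j l ≤ d * i := by
    simpa using sum_le_card_nsmul univ j i fun l _ => hj l
  rw [card_box] at hsplit
  rw [card_univ, Fintype.card_fin] at hcount
  nlinarith

section Ergodic

variable {X : Type*} [SeminormedAddCommGroup X] [NormedSpace ℝ X] {d : ℕ}
  {T : Fin d → X →ₗ[ℝ] X}

lemma Tpow_mem_contractions (hcontr : ∀ l (y : X), ‖T l y‖ ≤ ‖y‖) (k : Fin d → ℕ) :
    Tpow T k ∈ contractions X :=
  list_prod_mem fun _ hf => by
    obtain ⟨l, rfl⟩ := List.mem_ofFn.1 hf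
    exact pow_mem (S := contractions X) (hcontr l) _

noncomputable def ergOp (T : Fin d → X →ₗ[ℝ] X) (n : ℕ) : X →ₗ[ℝ] X :=
  ((n + 1 : ℝ) ^ d)⁻¹ • ∑ k ∈ box d n, Tpow T k

lemma ergOp_apply (n : ℕ) (y : X) : ergOp T n y = erg T y n := by
  simp [ergOp, erg, LinearMap.sum_apply]

lemma commute_ergOp (hcomm : ∀ l m, T l ∘ₗ T m = T m ∘ₗ T l) (i m : ℕ) :
    Commute (ergOp T i) (ergOp T m) :=
  ((Commute.sum_left _ _ _ fun a _ => Commute.sum_right _ _ _ fun b _ =>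
    commute_Tpow hcomm a b).smul_left _).smul_right _

lemma erg_eq_inv_card_smul_sum (y : X) (n : ℕ) :
    erg T y n = (#(box d n) : ℝ)⁻¹ • ∑ k ∈ box d n, Tpow T k y := by
  rw [erg, card_box]
  push_cast
  rfl

lemma norm_erg_le (hcontr : ∀ l (y : X), ‖T l y‖ ≤ ‖y‖) (y : X) (n : ℕ) :
    ‖erg T y n‖ ≤ ‖y‖ := by
  rw [erg_eq_inv_card_smul_sum]
  exact norm_inv_card_smul_sum_le (norm_nonneg y) fun k _ => Tpow_mem_contractions hcontr k y

/-- `T^j` moves the box `[0,m]^d` to `j + [0,m]^d`, and only the symmetric difference of the two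
boxes, of relative size `O(d i / m)`, survives in `T^j x_m - x_m`. -/
lemma norm_Tpow_erg_sub_erg_le (hcomm : ∀ l m, T l ∘ₗ T m = T m ∘ₗ T l)
    (hcontr : ∀ l (y : X), ‖T l y‖ ≤ ‖y‖) (x : X) {i m : ℕ} {j : Fin d → ℕ}
    (hj : ∀ l, j l ≤ i) :
    ‖Tpow T j (erg T x m) - erg T x m‖ ≤ 2 * d * i / (m + 1) * ‖x‖ := by
  set S := box d m
  set S' := S.image (j + ·)
  have hS' : #S = #S' := (card_image_of_injective _ (add_right_injective j)).symm
  have hshift : Tpow T j (erg T x m) = ((m + 1 : ℝ) ^ d)⁻¹ • ∑ k ∈ S', Tpow T k x := by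
    rw [erg, map_smul, map_sum, sum_image fun a _ b _ h => add_right_injective j h]
    simp only [← Module.End.mul_apply, ← Tpow_add hcomm]
    rfl
  have hdiff := norm_sum_sub_sum_le_of_card_eq hS' (f := fun k => Tpow T k x)
    fun k => Tpow_mem_contractions hcontr k x
  have hcount : (#(S \ S') : ℝ) * (m + 1) ≤ d * i * (m + 1) ^ d := by
    exact_mod_cast card_box_sdiff_image_add_mul_le (m := m) hj
  rw [hshift, erg, ← smul_sub, norm_smul, norm_inv, norm_pow, Real.norm_of_nonneg (by positivity)]
  calc ((m + 1 : ℝ) ^ d)⁻¹ * ‖∑ k ∈ S', Tpow T k x - ∑ k ∈ S, Tpow T k x‖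
      ≤ ((m + 1 : ℝ) ^ d)⁻¹ * (2 * #(S \ S') * ‖x‖) := by gcongr
    _ ≤ 2 * d * i / (m + 1) * ‖x‖ := by
      rw [← mul_assoc]
      gcongr
      rw [inv_mul_eq_div, div_le_div_iff₀ (by positivity) (by positivity)]
      nlinarith

lemma norm_erg_erg_sub_erg_le (hcomm : ∀ l m, T l ∘ₗ T m = T m ∘ₗ T l)
    (hcontr : ∀ l (y : X), ‖T l y‖ ≤ ‖y‖) (x : X) (i m : ℕ) :
    ‖erg T (erg T x m) i - erg T x m‖ ≤ 2 * d * i / (m + 1) * ‖x‖ := by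
  have hbox : (box d i).Nonempty := ⟨0, mem_box.2 fun _ => Nat.zero_le _⟩
  have havg : erg T (erg T x m) i - erg T x m =
      (#(box d i) : ℝ)⁻¹ • ∑ j ∈ box d i, (Tpow T j (erg T x m) - erg T x m) := by
    rw [sum_sub_distrib, smul_sub, sum_const, ← Nat.cast_smul_eq_nsmul ℝ,
      inv_smul_smul₀ (by exact_mod_cast hbox.card_pos.ne'), erg_eq_inv_card_smul_sum]
  rw [havg]
  exact norm_inv_card_smul_sum_le (by positivity) fun j hj =>
    norm_Tpow_erg_sub_erg_le hcomm hcontr x (mem_box.1 hj)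

lemma two_mul_le_two_pow (d : ℕ) : 2 * d ≤ 2 ^ d := by
  cases d with
  | zero => simp
  | succ d =>
    have := d.lt_two_pow_self
    rw [pow_succ]
    omega

/-- The averages of `x` are almost invariant under the averaging operators of much smaller
index, and these commute with `y ↦ erg T y m`. -/
lemma norm_erg_le_norm_midpoint_add (hcomm : ∀ l m, T l ∘ₗ T m = T m ∘ₗ T l)
    (hcontr : ∀ l (y : X), ‖T l y‖ ≤ ‖y‖) (x : X) {i j s : ℕ} (m : ℕ) (his : i ≤ s)
    (hjs : j ≤ s) :
    ‖erg T x m‖ ≤ ‖(2 : ℝ)⁻¹ • (erg T x i + erg T x j)‖ + 2 ^ d * s / (m + 1) * ‖x‖ := by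
  set z := (2 : ℝ)⁻¹ • (erg T x i + erg T x j)
  have hz : erg T z m =
      (2 : ℝ)⁻¹ • (erg T (erg T x m) i + erg T (erg T x m) j) := by
    simp only [z, ← ergOp_apply, map_smul, map_add, ← Module.End.mul_apply,
      (commute_ergOp hcomm _ m).eq]
  have hi := norm_erg_erg_sub_erg_le hcomm hcontr x i m
  have hj := norm_erg_erg_sub_erg_le hcomm hcontr x j m
  have hds : (2 * d : ℝ) ≤ 2 ^ d := by exact_mod_cast two_mul_le_two_pow d
  have hij : (i + j : ℝ) ≤ 2 * s := by exact_mod_cast (by omega : i + j ≤ 2 * s)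
  have herr : ‖erg T x m - erg T z m‖ ≤ 2 ^ d * s / (m + 1) * ‖x‖ := by
    rw [hz, show erg T x m - (2 : ℝ)⁻¹ • (erg T (erg T x m) i + erg T (erg T x m) j) =
        -((2 : ℝ)⁻¹ • ((erg T (erg T x m) i - erg T x m) + (erg T (erg T x m) j - erg T x m)))
        by module, norm_neg, norm_smul_of_nonneg (by norm_num)]
    calc (2 : ℝ)⁻¹ * ‖(erg T (erg T x m) i - erg T x m) + (erg T (erg T x m) j - erg T x m)‖
        ≤ 2⁻¹ * (2 * d * i / (m + 1) * ‖x‖ + 2 * d * j / (m + 1) * ‖x‖) := by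
          gcongr
          exact (norm_add_le _ _).trans (add_le_add hi hj)
      _ = d * (i + j) / (m + 1) * ‖x‖ := by ring
      _ ≤ 2 ^ d * s / (m + 1) * ‖x‖ := by
          gcongr ?_ / _ * _
          nlinarith
  calc ‖erg T x m‖ ≤ ‖erg T z m‖ + ‖erg T x m - erg T z m‖ := norm_le_insert' _ _
    _ ≤ ‖z‖ + 2 ^ d * s / (m + 1) * ‖x‖ := add_le_add (norm_erg_le hcontr z m) herr

end Ergodic

lemma le_Phi (d : ℕ) (δ : ℝ) (Q : ℕ) : Q ≤ Phi d δ Q := le_max_left _ _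

lemma Phi_mono {d : ℕ} {δ : ℝ} (hδ : 0 < δ) : Monotone (Phi d δ) := fun _ _ hab =>
  max_le_max hab (Nat.ceil_mono (by gcongr))

lemma two_pow_mul_div_le_of_Phi_le {d s m : ℕ} {δ : ℝ} (hδ : 0 < δ) (hm : Phi d δ s ≤ m) :
    2 ^ d * s / (m + 1 : ℝ) ≤ δ := by
  have hceil : (2 ^ d * s : ℝ) / δ ≤ m :=
    (Nat.le_ceil _).trans (by exact_mod_cast (le_max_right _ _).trans hm)
  rw [div_le_iff₀ hδ] at hceil
  rw [div_le_iff₀ (by positivity)]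
  nlinarith

lemma le_iterMax (g : ℕ → ℕ) (n : ℕ) : g n ≤ iterMax g n :=
  Finset.le_sup (Finset.self_mem_range_succ n)

lemma le_fPair (n : ℕ) : n ≤ fPair n := by
  unfold fPair
  nlinarith

/-- `Psi d γ g` unfolds to `Phi d (γ / 2) (stage γ g d ⌈1 / (γ / 2)⌉₊)`. -/
noncomputable def stage (γ : ℝ) (g : ℕ → ℕ) (d k : ℕ) : ℕ := (iterMax (fPair ∘ hfun γ g d))^[k] 0

lemma hfun_stage_le_stage_succ (γ : ℝ) (g : ℕ → ℕ) (d k : ℕ) :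
    hfun γ g d (stage γ g d k) ≤ stage γ g d (k + 1) := by
  rw [stage, stage, Function.iterate_succ_apply']
  exact (le_fPair _).trans (le_iterMax (fPair ∘ hfun γ g d) _)

lemma stage_mono (γ : ℝ) (g : ℕ → ℕ) (d : ℕ) : Monotone (stage γ g d) :=
  monotone_nat_of_le_succ fun k =>
    (le_Phi d (γ / 2) _).trans ((Nat.le_add_right _ _).trans (hfun_stage_le_stage_succ γ g d k))

/-- `[N, N + g N]` for `N = Phi d (γ / 2) (stage γ g d k)`. -/
noncomputable def window (γ : ℝ) (g : ℕ → ℕ) (d k : ℕ) : Set ℕ :=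
  Set.Icc (Phi d (γ / 2) (stage γ g d k)) (hfun γ g d (stage γ g d k))

section Metastability

variable {E : Type*} [SeminormedAddCommGroup E] {d : ℕ} {y : ℕ → E} {ε γ : ℝ}

lemma norm_le_max_sub_of_far (hγ : 0 < γ)
    (hdrop : ∀ i j s m : ℕ, i ≤ s → j ≤ s → ε < ‖y i - y j‖ →
      ‖y m‖ ≤ max ‖y i‖ ‖y j‖ - 2 * γ + 2 ^ d * s / (m + 1))
    {i j s m : ℕ} (his : i ≤ s) (hjs : j ≤ s) (hfar : ε < ‖y i - y j‖)
    (hm : Phi d (γ / 2) s ≤ m) :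
    ‖y m‖ ≤ max ‖y i‖ ‖y j‖ - γ := by
  have hmid := hdrop i j s m his hjs hfar
  have herr := two_pow_mul_div_le_of_Phi_le (half_pos hγ) hm
  linarith

lemma norm_le_of_far_in_windows (hγ : 0 < γ) (hy : ∀ n, ‖y n‖ ≤ 1)
    (hdrop : ∀ i j s m : ℕ, i ≤ s → j ≤ s → ε < ‖y i - y j‖ →
      ‖y m‖ ≤ max ‖y i‖ ‖y j‖ - 2 * γ + 2 ^ d * s / (m + 1))
    (g : ℕ → ℕ) {n : ℕ}
    (hwin : ∀ k < n, ∃ i ∈ window γ g d k, ∃ j ∈ window γ g d k, ε < ‖y i - y j‖)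
    {m : ℕ} (hm : Phi d (γ / 2) (stage γ g d n) ≤ m) :
    ‖y m‖ ≤ 1 - n * γ := by
  induction n generalizing m with
  | zero => simpa using hy m
  | succ n ih =>
    obtain ⟨i, hi, j, hj, hfar⟩ := hwin n n.lt_succ_self
    have hyi := ih (fun k hk => hwin k (hk.trans n.lt_succ_self)) hi.1
    have hyj := ih (fun k hk => hwin k (hk.trans n.lt_succ_self)) hj.1
    have hdec := norm_le_max_sub_of_far hγ hdrop
      (hi.2.trans (hfun_stage_le_stage_succ γ g d n))
      (hj.2.trans (hfun_stage_le_stage_succ γ g d n)) hfar hm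
    push_cast
    linarith [max_le hyi hyj]

theorem exists_metastable_of_norm_drop (hγ : 0 < γ) (hy : ∀ n, ‖y n‖ ≤ 1)
    (hdrop : ∀ i j s m : ℕ, i ≤ s → j ≤ s → ε < ‖y i - y j‖ →
      ‖y m‖ ≤ max ‖y i‖ ‖y j‖ - 2 * γ + 2 ^ d * s / (m + 1))
    (g : ℕ → ℕ) :
    ∃ N ≤ Psi d γ g, ∀ i ∈ Set.Icc N (N + g N), ∀ j ∈ Set.Icc N (N + g N),
      ‖y i - y j‖ ≤ ε := by
  by_contra! hbad
  set K := ⌈1 / (γ / 2)⌉₊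
  have hwin : ∀ k < K + 1, ∃ i ∈ window γ g d k, ∃ j ∈ window γ g d k, ε < ‖y i - y j‖ :=
    fun k hk =>
      hbad _ (Phi_mono (half_pos hγ) (stage_mono γ g d (Nat.lt_succ_iff.1 hk)))
  have hlast := norm_le_of_far_in_windows hγ hy hdrop g hwin le_rfl
  have hK : 1 / (γ / 2) ≤ K := Nat.le_ceil _
  rw [div_le_iff₀ (half_pos hγ)] at hK
  push_cast at hlast
  nlinarith [norm_nonneg (y (Phi d (γ / 2) (stage γ g d (K + 1))))]

end Metastability

lemma norm_midpoint_le_max_sub {E : Type*} [SeminormedAddCommGroup E] [Module ℝ E] {ε η : ℝ}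
    (huc : ∀ y z : E, ‖y‖ ≤ ‖z‖ → ‖z‖ ≤ 1 → ε ≤ ‖y - z‖ → ‖(2 : ℝ)⁻¹ • (y + z)‖ ≤ ‖z‖ - η)
    {y z : E} (hy : ‖y‖ ≤ 1) (hz : ‖z‖ ≤ 1) (hyz : ε ≤ ‖y - z‖) :
    ‖(2 : ℝ)⁻¹ • (y + z)‖ ≤ max ‖y‖ ‖z‖ - η := by
  rcases le_total ‖y‖ ‖z‖ with h | h
  · rw [max_eq_right h]
    exact huc y z h hz hyz
  · rw [max_eq_left h, add_comm]
    exact huc z y h hy (by rwa [norm_sub_rev])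

theorem stmt9_general {X : Type*} [NormedAddCommGroup X] [NormedSpace ℝ X]
    (d : ℕ) (T : Fin d → X →ₗ[ℝ] X)
    (hcomm : ∀ l m, T l ∘ₗ T m = T m ∘ₗ T l)
    (hcontr : ∀ l (y : X), ‖T l y‖ ≤ ‖y‖)
    (x : X) (hx : ‖x‖ ≤ 1)
    (u : ℝ → ℝ) (hu : ∀ ε > (0:ℝ), 0 < u ε)
    (humod : ∀ ε > (0:ℝ), ∀ y z : X, ‖y‖ ≤ ‖z‖ → ‖z‖ ≤ 1 → ε ≤ ‖y - z‖ →
      ‖(2:ℝ)⁻¹ • (y + z)‖ ≤ ‖z‖ - u ε)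
    (ε : ℝ) (hε : 0 < ε) (g : ℕ → ℕ) :
    ∃ N ≤ Theta u d ε g, ∀ i ∈ Set.Icc N (N + g N), ∀ j ∈ Set.Icc N (N + g N),
      ‖erg T x i - erg T x j‖ ≤ ε := by
  have hy : ∀ n, ‖erg T x n‖ ≤ 1 := fun n => (norm_erg_le hcontr x n).trans hx
  refine exists_metastable_of_norm_drop (half_pos (hu ε hε)) hy ?_ g
  intro i j s m his hjs hfar
  calc ‖erg T x m‖
      ≤ ‖(2 : ℝ)⁻¹ • (erg T x i + erg T x j)‖ + 2 ^ d * s / (m + 1) * ‖x‖ :=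
        norm_erg_le_norm_midpoint_add hcomm hcontr x m his hjs
    _ ≤ (max ‖erg T x i‖ ‖erg T x j‖ - u ε) + 2 ^ d * s / (m + 1) * 1 := by
        gcongr
        exact norm_midpoint_le_max_sub (humod ε hε) (hy i) (hy j) hfar.le
    _ = max ‖erg T x i‖ ‖erg T x j‖ - 2 * (u ε / 2) + 2 ^ d * s / (m + 1) := by ring

theorem stmt9 {X : Type*} [NormedAddCommGroup X] [NormedSpace ℝ X] [CompleteSpace X]
    (d : ℕ) (hd : 1 ≤ d) (T : Fin d → X →ₗ[ℝ] X)
    (hcomm : ∀ l m, T l ∘ₗ T m = T m ∘ₗ T l)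
    (hcontr : ∀ l (y : X), ‖T l y‖ ≤ ‖y‖)
    (x : X) (hx : ‖x‖ ≤ 1)
    (u : ℝ → ℝ) (hu : ∀ ε > (0:ℝ), 0 < u ε)
    (humod : ∀ ε > (0:ℝ), ∀ y z : X, ‖y‖ ≤ ‖z‖ → ‖z‖ ≤ 1 → ε ≤ ‖y - z‖ →
      ‖(2:ℝ)⁻¹ • (y + z)‖ ≤ ‖z‖ - u ε)
    (ε : ℝ) (hε : 0 < ε) (g : ℕ → ℕ) :
    ∃ N ≤ Theta u d ε g, ∀ i ∈ Set.Icc N (N + g N), ∀ j ∈ Set.Icc N (N + g N),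
      ‖erg T x i - erg T x j‖ ≤ ε :=
  stmt9_general d T hcomm hcontr x hx u hu humod ε hε g
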